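/- For every nonnegative integer n, the sum over k from 0 to n of H_{n−k}/((k+1)(k+2)) equals (n/(n+2))·H_{n+1}. -/

import Mathlib

/-- The `n`-th harmonic number `H_n = ∑_{k=1}^n 1/k`, with `H_0 = 0`. -/
def H (n : ℕ) : ℚ := ∑ k ∈ Finset.range n, 1 / ((k : ℚ) + 1)

/-- The generalized harmonic number of order 2, `H_n^{(2)} = ∑_{k=1}^n 1/k^2`, with `H_0^{(2)} = 0`. -/
def H2 (n : ℕ) : ℚ := ∑ k ∈ Finset.range n, 1 / ((k : ℚ) + 1) ^ 2

/-!
Expanding `H_{n-k} = ∑_{i < n-k} 1/(i+1)` and swapping the two sums turns the left side into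
`∑_{i < n} 1/(i+1) · ∑_{k < n-i} 1/((k+1)(k+2))`. The inner sum telescopes to `(n-i)/(n-i+1)`,
and the partial-fraction split `1/(i+1) · (n-i)/(n-i+1) = ((n+1)/(i+1) - 1/(n-i+1))/(n+2)`
leaves `((n+1) H_n - (H_{n+1} - 1))/(n+2) = n H_{n+1}/(n+2)`.
-/

open Finset

theorem Finset.sum_range_sum_range_sub_mul {R : Type*} [NonUnitalNonAssocSemiring R]
    (f g : ℕ → R) (n : ℕ) :
    ∑ k ∈ range (n + 1), (∑ i ∈ range (n - k), f i) * g k =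
      ∑ i ∈ range n, f i * ∑ k ∈ range (n - i), g k := by
  simp only [sum_mul, mul_sum]
  exact sum_comm' fun k i => by simp only [mem_range]; omega

section Field

variable {K : Type*} [Field K] [CharZero K]

theorem sum_range_one_div_add_one_mul_add_two (m : ℕ) :
    ∑ k ∈ range m, 1 / (((k : K) + 1) * ((k : K) + 2)) = m / (m + 1) := by
  induction m with
  | zero => simp
  | succ m ih =>
    have h2 : (m : K) + 2 ≠ 0 := by norm_cast
    rw [sum_range_succ, ih]
    push_cast
    rw [add_assoc, one_add_one_eq_two]
    field_simp
    ring

theorem one_div_add_one_mul_div_add_one {a b n : ℕ} (h : a + b = n) :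
    1 / ((a : K) + 1) * ((b : K) / (b + 1)) = ((n + 1) / (a + 1) - 1 / (b + 1)) / (n + 2) := by
  have h2 : (n : K) + 2 ≠ 0 := by norm_cast
  field_simp
  rw [← h]
  push_cast
  ring

end Field

theorem H_succ (n : ℕ) : H (n + 1) = H n + 1 / ((n : ℚ) + 1) := by
  rw [H, H, sum_range_succ]

theorem sum_range_one_div_sub_add_one (n : ℕ) :
    ∑ i ∈ range n, 1 / (((n - i : ℕ) : ℚ) + 1) = H (n + 1) - 1 := by
  rw [H, sum_range_succ', ← sum_range_reflect]
  simp only [Nat.cast_zero, zero_add, div_one, add_sub_cancel_right]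
  refine sum_congr rfl fun i hi => ?_
  have := mem_range.mp hi
  congr 3
  omega

theorem stmt_17 (n : ℕ) :
    ∑ k ∈ Finset.range (n + 1), H (n - k) / (((k : ℚ) + 1) * ((k : ℚ) + 2)) =
      ((n : ℚ) / ((n : ℚ) + 2)) * H (n + 1) := by
  calc ∑ k ∈ range (n + 1), H (n - k) / (((k : ℚ) + 1) * ((k : ℚ) + 2))
      = ∑ k ∈ range (n + 1), (∑ i ∈ range (n - k), 1 / ((i : ℚ) + 1)) *
          (1 / (((k : ℚ) + 1) * ((k : ℚ) + 2))) := by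
        simp only [H, ← div_eq_mul_one_div]
    _ = ∑ i ∈ range n, 1 / ((i : ℚ) + 1) *
          ∑ k ∈ range (n - i), 1 / (((k : ℚ) + 1) * ((k : ℚ) + 2)) :=
        sum_range_sum_range_sub_mul _ _ n
    _ = ∑ i ∈ range n, ((n + 1) / ((i : ℚ) + 1) - 1 / (((n - i : ℕ) : ℚ) + 1)) / (n + 2) :=
        sum_congr rfl fun i hi => by
          rw [sum_range_one_div_add_one_mul_add_two,
            one_div_add_one_mul_div_add_one (Nat.add_sub_of_le (mem_range.mp hi).le)]
    _ = ((n + 1) * H n - (H (n + 1) - 1)) / (n + 2) := by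
        rw [← sum_div, sum_sub_distrib, ← sum_range_one_div_sub_add_one, H, mul_sum]
        simp only [← div_eq_mul_one_div]
    _ = (n / (n + 2)) * H (n + 1) := by
        rw [H_succ]
        field_simp
        ring
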